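/- arXiv:1901.09437 — 5 statements merged into one kernel-verified Lean document; each statement's English description precedes it below -/
import Mathlib

section
/- Let f₁,…,fₙ : R^d → R be convex and L-smooth, let f = (1/n)∑ᵢ fᵢ, and let x* minimize f. Then (1/n)∑ᵢ ‖∇fᵢ(x)‖² ≤ 4L(f(x) − f(x*)) + (2/n)∑ᵢ ‖∇fᵢ(x*)‖² for all x. -/
/-!
Write `D_i = f_i x - f_i x* - ⟪∇f_i x*, x - x*⟫` for the Bregman divergence of `f_i`. For a convex
`L`-smooth function, comparing the convexity lower bound at `x*` with the smoothness upper bound at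
`x` at the point `x - L⁻¹ (∇f_i x - ∇f_i x*)` gives `‖∇f_i x - ∇f_i x*‖² ≤ 2 L D_i`. Together with
`‖a‖² ≤ 2 ‖a - b‖² + 2 ‖b‖²` this bounds `‖∇f_i x‖²` by `4 L D_i + 2 ‖∇f_i x*‖²`, and summing over
`i` kills the linear terms of the `D_i` because `∑ᵢ ∇f_i x* = 0`.
-/

open scoped RealInnerProductSpace

theorem norm_sq_le_two_mul_norm_sub_sq_add_norm_sq {E : Type*} [SeminormedAddCommGroup E]
    (a b : E) : ‖a‖ ^ 2 ≤ 2 * (‖a - b‖ ^ 2 + ‖b‖ ^ 2) :=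
  calc ‖a‖ ^ 2 ≤ (‖a - b‖ + ‖b‖) ^ 2 := by gcongr; exact norm_le_norm_sub_add a b
    _ ≤ 2 * (‖a - b‖ ^ 2 + ‖b‖ ^ 2) := add_sq_le

section ConvexSmooth

variable {E : Type*} [NormedAddCommGroup E] [InnerProductSpace ℝ E] {L : ℝ}

theorem norm_sub_sq_le_of_convex_of_smooth (hL : 0 < L) {g : E → ℝ} {G : E → E}
    (hconv : ∀ x y, g y + ⟪G y, x - y⟫ ≤ g x)
    (hsmooth : ∀ x y, g x ≤ g y + ⟪G y, x - y⟫ + L / 2 * ‖x - y‖ ^ 2) (x y : E) :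
    ‖G x - G y‖ ^ 2 ≤ 2 * L * (g x - g y - ⟪G y, x - y⟫) := by
  set v := G x - G y
  have lower := hconv (x - L⁻¹ • v) y
  have upper := hsmooth (x - L⁻¹ • v) x
  have hv : ⟪G x, v⟫ - ⟪G y, v⟫ = ‖v‖ ^ 2 := by
    rw [← inner_sub_left, real_inner_self_eq_norm_sq]
  rw [sub_right_comm, inner_sub_right, real_inner_smul_right] at lower
  rw [sub_sub_cancel_left, inner_neg_right, real_inner_smul_right, norm_neg, norm_smul,
    Real.norm_of_nonneg (inv_nonneg.2 hL.le)] at upper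
  field_simp at lower upper
  linarith

theorem sum_norm_sq_le_of_convex_of_smooth {ι : Type*} (s : Finset ι) (hL : 0 < L)
    {f : ι → E → ℝ} {G : ι → E → E}
    (hconv : ∀ i, ∀ x y, f i y + ⟪G i y, x - y⟫ ≤ f i x)
    (hsmooth : ∀ i, ∀ x y, f i x ≤ f i y + ⟪G i y, x - y⟫ + L / 2 * ‖x - y‖ ^ 2)
    {xstar : E} (hgradsum : ∑ i ∈ s, G i xstar = 0) (x : E) :
    ∑ i ∈ s, ‖G i x‖ ^ 2
      ≤ 4 * L * (∑ i ∈ s, f i x - ∑ i ∈ s, f i xstar) + 2 * ∑ i ∈ s, ‖G i xstar‖ ^ 2 := by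
  have hinner : ∑ i ∈ s, ⟪G i xstar, x - xstar⟫ = 0 := by
    rw [← sum_inner, hgradsum, inner_zero_left]
  calc ∑ i ∈ s, ‖G i x‖ ^ 2
      ≤ ∑ i ∈ s, 2 * (‖G i x - G i xstar‖ ^ 2 + ‖G i xstar‖ ^ 2) :=
        Finset.sum_le_sum fun i _ => norm_sq_le_two_mul_norm_sub_sq_add_norm_sq _ _
    _ ≤ ∑ i ∈ s, 2 * (2 * L * (f i x - f i xstar - ⟪G i xstar, x - xstar⟫)
          + ‖G i xstar‖ ^ 2) := by
        gcongr with i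
        exact norm_sub_sq_le_of_convex_of_smooth hL (hconv i) (hsmooth i) x xstar
    _ = 4 * L * (∑ i ∈ s, f i x - ∑ i ∈ s, f i xstar) + 2 * ∑ i ∈ s, ‖G i xstar‖ ^ 2 := by
        simp only [Finset.sum_add_distrib, Finset.sum_sub_distrib, mul_add, ← Finset.mul_sum,
          hinner]
        ring

end ConvexSmooth

theorem stmt2_general {d n : ℕ} (L : ℝ) (hL : 0 < L)
    (f : Fin n → EuclideanSpace ℝ (Fin d) → ℝ)
    (G : Fin n → EuclideanSpace ℝ (Fin d) → EuclideanSpace ℝ (Fin d))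
    (hconv : ∀ i, ∀ x y : EuclideanSpace ℝ (Fin d),
      f i x ≥ f i y + ⟪G i y, x - y⟫)
    (hsmooth : ∀ i, ∀ x y : EuclideanSpace ℝ (Fin d),
      f i x ≤ f i y + ⟪G i y, x - y⟫ + L / 2 * ‖x - y‖ ^ 2)
    (xstar : EuclideanSpace ℝ (Fin d))
    (hgradsum : ∑ i, G i xstar = 0)
    (x : EuclideanSpace ℝ (Fin d)) :
    (n : ℝ)⁻¹ * ∑ i, ‖G i x‖ ^ 2
      ≤ 4 * L * ((n : ℝ)⁻¹ * ∑ i, f i x - (n : ℝ)⁻¹ * ∑ i, f i xstar)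
        + 2 / n * ∑ i, ‖G i xstar‖ ^ 2 :=
  calc (n : ℝ)⁻¹ * ∑ i, ‖G i x‖ ^ 2
      ≤ (n : ℝ)⁻¹ * (4 * L * (∑ i, f i x - ∑ i, f i xstar) + 2 * ∑ i, ‖G i xstar‖ ^ 2) := by
        gcongr
        exact sum_norm_sq_le_of_convex_of_smooth _ hL hconv hsmooth hgradsum x
    _ = 4 * L * ((n : ℝ)⁻¹ * ∑ i, f i x - (n : ℝ)⁻¹ * ∑ i, f i xstar)
        + 2 / n * ∑ i, ‖G i xstar‖ ^ 2 := by ring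

/-- If `f₁,…,fₙ` are convex and `L`-smooth, `f = (1/n)∑ᵢ fᵢ`, and `x*` minimizes `f`
(so `∑ᵢ ∇fᵢ(x*) = 0`), then
`(1/n)∑ᵢ‖∇fᵢ(x)‖² ≤ 4L(f(x) − f(x*)) + (2/n)∑ᵢ‖∇fᵢ(x*)‖²` for all `x`. -/
theorem stmt2 {d n : ℕ} (hn : 0 < n) (L : ℝ) (hL : 0 < L)
    (f : Fin n → EuclideanSpace ℝ (Fin d) → ℝ)
    (G : Fin n → EuclideanSpace ℝ (Fin d) → EuclideanSpace ℝ (Fin d))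
    (hconv : ∀ i, ∀ x y : EuclideanSpace ℝ (Fin d),
      f i x ≥ f i y + ⟪G i y, x - y⟫)
    (hsmooth : ∀ i, ∀ x y : EuclideanSpace ℝ (Fin d),
      f i x ≤ f i y + ⟪G i y, x - y⟫ + L / 2 * ‖x - y‖ ^ 2)
    (xstar : EuclideanSpace ℝ (Fin d))
    (hmin : ∀ y, (n : ℝ)⁻¹ * ∑ i, f i xstar ≤ (n : ℝ)⁻¹ * ∑ i, f i y)
    (hgradsum : ∑ i, G i xstar = 0)
    (x : EuclideanSpace ℝ (Fin d)) :
    (n : ℝ)⁻¹ * ∑ i, ‖G i x‖ ^ 2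
      ≤ 4 * L * ((n : ℝ)⁻¹ * ∑ i, f i x - (n : ℝ)⁻¹ * ∑ i, f i xstar)
        + 2 / n * ∑ i, ‖G i xstar‖ ^ 2 :=
  stmt2_general L hL f G hconv hsmooth xstar hgradsum x
end

section
/- Let g be a random vector in R^d with E g = v and Var(g) ≤ ρ̄‖v‖² + σ̄², and let U be a uniformly random subset of τm blocks independent of g. Then E‖(1/τ)g_U‖² ≤ (1/τ − 1 + ρ̄/τ + 1)‖v‖² + σ̄²/τ; more precisely, E‖(1/τ)g_U − v‖² ≤ (1/τ − 1 + ρ̄/τ)‖v‖² + σ̄²/τ. -/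
/-!
A given block lies in `C(m-1, k-1)` of the `C(m, k)` subsets, so each coordinate survives in
`x_U` with probability `τ = k/m` and `τ⁻¹ x_U` averages to `x`. Restriction is an orthogonal
projection, so `‖x_U‖² = ⟪x_U, x⟫` and the average of `‖τ⁻¹ x_U‖²` is `τ⁻¹ ‖x‖²`. Expanding
the square and using `E‖g‖² = E‖g - v‖² + ‖v‖²` turns both bounds into the variance bound.
-/

open MeasureTheory Finset

/-- `x_U`: keep the coordinates of `x` lying in blocks of `U`, zero the rest. -/
noncomputable def restr {d m : ℕ} (b : Fin d → Fin m) (U : Finset (Fin m))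
    (x : EuclideanSpace ℝ (Fin d)) : EuclideanSpace ℝ (Fin d) :=
  (WithLp.equiv 2 (Fin d → ℝ)).symm (fun j => if b j ∈ U then x j else 0)

open scoped RealInnerProductSpace

lemma Finset.card_filter_powersetCard_mem {α : Type*} [DecidableEq α] {s : Finset α} {i : α}
    (hi : i ∈ s) {k : ℕ} (hk : 0 < k) :
    #{U ∈ s.powersetCard k | i ∈ U} = (#s - 1).choose (k - 1) := by
  simpa using card_filter_powersetCard_subset {i} s k (singleton_subset_iff.2 hi) hk

lemma Nat.cast_choose_pred_div_choose {m k : ℕ} (hk : 0 < k) (hkm : k ≤ m) :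
    ((m - 1).choose (k - 1) : ℝ) / m.choose k = k / m := by
  have hm : 0 < m := hk.trans_le hkm
  have h := Nat.add_one_mul_choose_eq (m - 1) (k - 1)
  rw [Nat.sub_add_cancel hm, Nat.sub_add_cancel hk] at h
  have hc : (m.choose k : ℝ) ≠ 0 := by exact_mod_cast (Nat.choose_pos hkm).ne'
  rw [div_eq_div_iff hc (by positivity)]
  exact_mod_cast (mul_comm _ _).trans h |>.trans (mul_comm _ _)

lemma average_norm_sub_sq {ι E : Type*} [SeminormedAddCommGroup E] [InnerProductSpace ℝ E]
    {s : Finset ι} (hs : s.Nonempty) (y : ι → E) (v : E) :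
    (#s : ℝ)⁻¹ * ∑ i ∈ s, ‖y i - v‖ ^ 2
      = (#s : ℝ)⁻¹ * ∑ i ∈ s, ‖y i‖ ^ 2 - 2 * ⟪(#s : ℝ)⁻¹ • ∑ i ∈ s, y i, v⟫ + ‖v‖ ^ 2 := by
  have hs' : (#s : ℝ) ≠ 0 := by exact_mod_cast hs.card_pos.ne'
  simp only [norm_sub_sq_real, sum_add_distrib, sum_sub_distrib, sum_const, nsmul_eq_mul,
    real_inner_smul_left, sum_inner, ← mul_sum]
  field_simp

section restr

variable {d m : ℕ} (b : Fin d → Fin m)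

lemma restr_apply (U : Finset (Fin m)) (x : EuclideanSpace ℝ (Fin d)) (j : Fin d) :
    restr b U x j = if b j ∈ U then x j else 0 := rfl

lemma norm_restr_sq (U : Finset (Fin m)) (x : EuclideanSpace ℝ (Fin d)) :
    ‖restr b U x‖ ^ 2 = ⟪restr b U x, x⟫ := by
  rw [← real_inner_self_eq_norm_sq]
  simp only [PiLp.inner_apply, restr_apply]
  refine sum_congr rfl fun j _ => ?_
  split_ifs <;> simp

lemma sum_restr {k : ℕ} (hk : 0 < k) (x : EuclideanSpace ℝ (Fin d)) :
    ∑ U ∈ powersetCard k univ, restr b U x = ((m - 1).choose (k - 1) : ℝ) • x := by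
  ext j
  simp only [WithLp.ofLp_sum, Finset.sum_apply, restr_apply, PiLp.smul_apply, smul_eq_mul]
  rw [← sum_filter, sum_const, card_filter_powersetCard_mem (mem_univ _) hk, card_univ,
    Fintype.card_fin, nsmul_eq_mul]

variable {k : ℕ} (hk : 0 < k) (hkm : k ≤ m)
include hk hkm

lemma average_smul_restr (x : EuclideanSpace ℝ (Fin d)) :
    (m.choose k : ℝ)⁻¹ • ∑ U ∈ powersetCard k univ, ((k : ℝ) / m)⁻¹ • restr b U x = x := by
  have hm : (0 : ℝ) < m := by exact_mod_cast hk.trans_le hkm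
  have hscalar : (m.choose k : ℝ)⁻¹ * ((k : ℝ) / m)⁻¹ * (m - 1).choose (k - 1)
      = ((k : ℝ) / m)⁻¹ * (((m - 1).choose (k - 1) : ℝ) / m.choose k) := by ring
  rw [← smul_sum, sum_restr b hk, smul_smul, smul_smul, hscalar,
    Nat.cast_choose_pred_div_choose hk hkm, inv_mul_cancel₀ (by positivity), one_smul]

lemma average_norm_sq_smul_restr (x : EuclideanSpace ℝ (Fin d)) :
    (m.choose k : ℝ)⁻¹ * ∑ U ∈ powersetCard k univ, ‖((k : ℝ) / m)⁻¹ • restr b U x‖ ^ 2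
      = ((k : ℝ) / m)⁻¹ * ‖x‖ ^ 2 := by
  have h (U : Finset (Fin m)) : ‖((k : ℝ) / m)⁻¹ • restr b U x‖ ^ 2
      = ((k : ℝ) / m)⁻¹ * ⟪((k : ℝ) / m)⁻¹ • restr b U x, x⟫ := by
    rw [norm_smul, mul_pow, norm_restr_sq, real_inner_smul_left, Real.norm_eq_abs, sq_abs]
    ring
  simp_rw [h, ← mul_sum, ← sum_inner]
  rw [mul_left_comm, ← real_inner_smul_left, average_smul_restr b hk hkm,
    real_inner_self_eq_norm_sq]

lemma average_norm_sq_smul_restr_sub (x v : EuclideanSpace ℝ (Fin d)) :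
    (m.choose k : ℝ)⁻¹ * ∑ U ∈ powersetCard k univ, ‖((k : ℝ) / m)⁻¹ • restr b U x - v‖ ^ 2
      = ((k : ℝ) / m)⁻¹ * ‖x‖ ^ 2 - 2 * ⟪x, v⟫ + ‖v‖ ^ 2 := by
  have hcard : #(powersetCard k (univ : Finset (Fin m))) = m.choose k := by simp
  rw [← hcard, average_norm_sub_sq (powersetCard_nonempty.2 (by simpa using hkm)), hcard,
    average_norm_sq_smul_restr b hk hkm, average_smul_restr b hk hkm]

end restr

lemma integrable_norm_sq_of_integrable_norm_sub_sq {Ω E : Type*} [MeasurableSpace Ω]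
    {μ : Measure Ω} [IsFiniteMeasure μ] [NormedAddCommGroup E] {g : Ω → E} {v : E}
    (hg : AEStronglyMeasurable g μ) (hg2 : Integrable (fun ω => ‖g ω - v‖ ^ 2) μ) :
    Integrable (fun ω => ‖g ω‖ ^ 2) μ := by
  have h : MemLp (fun ω => g ω - v) 2 μ :=
    (memLp_two_iff_integrable_sq_norm (hg.sub aestronglyMeasurable_const)).2 hg2
  have h' : MemLp (fun ω => g ω - v + v) 2 μ := h.add (memLp_const v)
  exact (memLp_two_iff_integrable_sq_norm hg).1 (by simpa using h')

section integral

variable {Ω E : Type*} [MeasurableSpace Ω] {μ : Measure Ω}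
  [NormedAddCommGroup E] [InnerProductSpace ℝ E] [CompleteSpace E] {g : Ω → E} {v : E}

lemma integral_inner_eq_norm_sq (hg : Integrable g μ) (hmean : ∫ ω, g ω ∂μ = v) :
    ∫ ω, ⟪g ω, v⟫ ∂μ = ‖v‖ ^ 2 := by
  simp_rw [real_inner_comm v]
  rw [integral_inner hg, hmean, real_inner_self_eq_norm_sq]

variable [IsProbabilityMeasure μ] (hg : Integrable g μ)
  (hg2 : Integrable (fun ω => ‖g ω - v‖ ^ 2) μ) (hmean : ∫ ω, g ω ∂μ = v)
include hg hg2 hmean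

lemma integral_norm_sq_eq_integral_norm_sub_sq_add :
    ∫ ω, ‖g ω‖ ^ 2 ∂μ = ∫ ω, ‖g ω - v‖ ^ 2 ∂μ + ‖v‖ ^ 2 := by
  have hexpand (ω : Ω) : ‖g ω‖ ^ 2 = ‖g ω - v‖ ^ 2 + (2 * ⟪g ω, v⟫ - ‖v‖ ^ 2) := by
    rw [norm_sub_sq_real]
    ring
  have hinner := (hg.inner_const (𝕜 := ℝ) v).const_mul 2
  have hinner' : Integrable (fun ω => 2 * ⟪g ω, v⟫ - ‖v‖ ^ 2) μ :=
    hinner.sub (integrable_const _)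
  simp_rw [hexpand]
  rw [integral_add hg2 hinner', integral_sub hinner (integrable_const _),
    integral_const_mul, integral_inner_eq_norm_sq hg hmean]
  simp
  ring

lemma integral_mul_norm_sq_sub_inner_add (c : ℝ) :
    ∫ ω, (c * ‖g ω‖ ^ 2 - 2 * ⟪g ω, v⟫ + ‖v‖ ^ 2) ∂μ
      = c * (∫ ω, ‖g ω - v‖ ^ 2 ∂μ + ‖v‖ ^ 2) - ‖v‖ ^ 2 := by
  have hsq := (integrable_norm_sq_of_integrable_norm_sub_sq hg.aestronglyMeasurable hg2).const_mul c
  have hinner := (hg.inner_const (𝕜 := ℝ) v).const_mul 2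
  have hdiff : Integrable (fun ω => c * ‖g ω‖ ^ 2 - 2 * ⟪g ω, v⟫) μ := hsq.sub hinner
  rw [integral_add hdiff (integrable_const _), integral_sub hsq hinner,
    integral_const_mul, integral_const_mul, integral_inner_eq_norm_sq hg hmean,
    integral_norm_sq_eq_integral_norm_sub_sq_add hg hg2 hmean]
  simp
  ring

end integral

/-- Independence of `U` from `g` is encoded by averaging uniformly over `U` inside the
expectation over `g`. -/
theorem stmt6 {d m : ℕ} (b : Fin d → Fin m) (k : ℕ) (hk : 0 < k) (hkm : k ≤ m)
    (τ : ℝ) (hτ : τ = (k : ℝ) / m)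
    {Ω : Type*} [MeasurableSpace Ω] (μ : Measure Ω) [IsProbabilityMeasure μ]
    (g : Ω → EuclideanSpace ℝ (Fin d)) (v : EuclideanSpace ℝ (Fin d))
    (ρbar σbar2 : ℝ)
    (hint : Integrable g μ)
    (hint2 : Integrable (fun ω => ‖g ω - v‖ ^ 2) μ)
    (hmean : ∫ ω, g ω ∂μ = v)
    (hvar : ∫ ω, ‖g ω - v‖ ^ 2 ∂μ ≤ ρbar * ‖v‖ ^ 2 + σbar2) :
    (∫ ω, ((m.choose k : ℝ))⁻¹ *
        ∑ U ∈ Finset.powersetCard k (Finset.univ : Finset (Fin m)),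
          ‖τ⁻¹ • restr b U (g ω) - v‖ ^ 2 ∂μ
      ≤ (τ⁻¹ - 1 + ρbar / τ) * ‖v‖ ^ 2 + σbar2 / τ)
    ∧ (∫ ω, ((m.choose k : ℝ))⁻¹ *
        ∑ U ∈ Finset.powersetCard k (Finset.univ : Finset (Fin m)),
          ‖τ⁻¹ • restr b U (g ω)‖ ^ 2 ∂μ
      ≤ (τ⁻¹ - 1 + ρbar / τ + 1) * ‖v‖ ^ 2 + σbar2 / τ) := by
  have hτ_pos : 0 < τ := by
    have : (0 : ℝ) < m := by exact_mod_cast hk.trans_le hkm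
    rw [hτ]; positivity
  have hvar' := mul_le_mul_of_nonneg_left hvar (inv_nonneg.2 hτ_pos.le)
  subst hτ
  simp_rw [average_norm_sq_smul_restr_sub b hk hkm, average_norm_sq_smul_restr b hk hkm]
  rw [integral_mul_norm_sq_sub_inner_add hint hint2 hmean, integral_const_mul,
    integral_norm_sq_eq_integral_norm_sub_sq_add hint hint2 hmean]
  simp only [div_eq_mul_inv] at hvar' ⊢
  constructor <;> linarith
end

section
/- Let fᵢ be L-smooth and μ-strongly convex, x̃ = z − τγ∇fᵢ(z), and xᵢ* = x* − τγ∇fᵢ(x*). Then ‖x̃ − xᵢ*‖² ≤ (1 − τγμ)‖z − x*‖² − 2γτ(1 − τγL)(fᵢ(z) − fᵢ(x*) − ⟨∇fᵢ(x*), z − x*⟩). -/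
open scoped RealInnerProductSpace

/-!
Write `w = z - x*`, `g = ∇f(z) - ∇f(x*)` and `D` for the Bregman divergence of `f` between `z`
and `x*`. Then `‖x̃ - xᵢ*‖² = ‖w‖² - 2τγ⟪g, w⟫ + (τγ)²‖g‖²`. Strong convexity at `z` bounds
`⟪g, w⟫` below by `D + μ/2 ‖w‖²`, and smoothness together with convexity gives the cocoercivity
bound `‖g‖² ≤ 2L D`; substituting both yields the claim.
-/

section
variable {E : Type*} [NormedAddCommGroup E] [InnerProductSpace ℝ E] {f : E → ℝ} {G : E → E}

def bregman (f : E → ℝ) (G : E → E) (x y : E) : ℝ := f x - f y - ⟪G y, x - y⟫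

theorem bregman_add_le_inner_sub {μ : ℝ} {x y : E}
    (hsc : f y ≥ f x + ⟪G x, y - x⟫ + μ / 2 * ‖y - x‖ ^ 2) :
    bregman f G x y + μ / 2 * ‖x - y‖ ^ 2 ≤ ⟪G x - G y, x - y⟫ := by
  rw [← neg_sub x y, inner_neg_right, norm_neg] at hsc
  rw [bregman, inner_sub_left]
  linarith

theorem norm_sub_sq_le_two_mul_bregman {L : ℝ} (hL : 0 < L)
    (hsmooth : ∀ x y, f x ≤ f y + ⟪G y, x - y⟫ + L / 2 * ‖x - y‖ ^ 2)
    (hconv : ∀ x y, f y + ⟪G y, x - y⟫ ≤ f x) (x y : E) :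
    ‖G x - G y‖ ^ 2 ≤ 2 * L * bregman f G x y := by
  set g := G x - G y
  -- Evaluate the smoothness bound around `x` and the convexity bound around `y` at `x - L⁻¹ • g`.
  have hup := hsmooth (x - L⁻¹ • g) x
  have hlow := hconv (x - L⁻¹ • g) y
  rw [sub_sub_cancel_left, inner_neg_right, norm_neg, inner_smul_right, norm_smul,
    Real.norm_of_nonneg (inv_nonneg.2 hL.le)] at hup
  rw [sub_right_comm, inner_sub_right, inner_smul_right] at hlow
  have hg : ‖g‖ ^ 2 = ⟪G x, g⟫ - ⟪G y, g⟫ := by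
    rw [← real_inner_self_eq_norm_sq, inner_sub_left]
  have key : ‖g‖ ^ 2 / (2 * L) ≤ bregman f G x y := by
    have hquad : L / 2 * (L⁻¹ * ‖g‖) ^ 2 = ‖g‖ ^ 2 / (2 * L) := by field_simp
    have hlin : L⁻¹ * ⟪G x, g⟫ - L⁻¹ * ⟪G y, g⟫ = 2 * (‖g‖ ^ 2 / (2 * L)) := by
      rw [← mul_sub, ← hg]
      field_simp
    rw [bregman]
    linarith
  rwa [div_le_iff₀' (by positivity)] at key

theorem norm_gradientStep_sub_sq_le {L μ s : ℝ} (hL : 0 < L) (hμ : 0 ≤ μ) (hs : 0 ≤ s)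
    (hsmooth : ∀ x y, f x ≤ f y + ⟪G y, x - y⟫ + L / 2 * ‖x - y‖ ^ 2)
    (hsc : ∀ x y, f x ≥ f y + ⟪G y, x - y⟫ + μ / 2 * ‖x - y‖ ^ 2) (z x : E) :
    ‖(z - s • G z) - (x - s • G x)‖ ^ 2
      ≤ (1 - s * μ) * ‖z - x‖ ^ 2 - 2 * s * (1 - s * L) * bregman f G z x := by
  have hconv : ∀ x y, f y + ⟪G y, x - y⟫ ≤ f x := fun x y =>
    (le_add_of_nonneg_right (by positivity)).trans (hsc x y)
  have hinner := bregman_add_le_inner_sub (G := G) (hsc x z)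
  have hcoco := norm_sub_sq_le_two_mul_bregman hL hsmooth hconv z x
  have hexpand : ‖(z - s • G z) - (x - s • G x)‖ ^ 2
      = ‖z - x‖ ^ 2 - 2 * s * ⟪G z - G x, z - x⟫ + s ^ 2 * ‖G z - G x‖ ^ 2 := by
    rw [sub_sub_sub_comm, ← smul_sub, norm_sub_sq_real, inner_smul_right, norm_smul,
      Real.norm_of_nonneg hs, real_inner_comm]
    ring
  rw [hexpand]
  linarith [mul_le_mul_of_nonneg_left hinner hs, mul_le_mul_of_nonneg_left hcoco (sq_nonneg s)]

end

/-- If `fᵢ` is `L`-smooth and `μ`-strongly convex, `x̃ = z − τγ∇fᵢ(z)` and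
`xᵢ* = x* − τγ∇fᵢ(x*)`, then
`‖x̃ − xᵢ*‖² ≤ (1 − τγμ)‖z − x*‖² − 2γτ(1 − τγL)(fᵢ(z) − fᵢ(x*) − ⟨∇fᵢ(x*), z − x*⟩)`. -/
theorem stmt8 {d : ℕ} (L μ γ τ : ℝ) (hL : 0 < L) (hμ : 0 < μ) (hγ : 0 < γ) (hτ : 0 < τ)
    (f : EuclideanSpace ℝ (Fin d) → ℝ)
    (G : EuclideanSpace ℝ (Fin d) → EuclideanSpace ℝ (Fin d))
    (hsmooth : ∀ x y : EuclideanSpace ℝ (Fin d),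
      f x ≤ f y + ⟪G y, x - y⟫ + L / 2 * ‖x - y‖ ^ 2)
    (hsc : ∀ x y : EuclideanSpace ℝ (Fin d),
      f x ≥ f y + ⟪G y, x - y⟫ + μ / 2 * ‖x - y‖ ^ 2)
    (z xstar : EuclideanSpace ℝ (Fin d)) :
    ‖(z - (τ * γ) • G z) - (xstar - (τ * γ) • G xstar)‖ ^ 2
      ≤ (1 - τ * γ * μ) * ‖z - xstar‖ ^ 2
        - 2 * γ * τ * (1 - τ * γ * L) * (f z - f xstar - ⟪G xstar, z - xstar⟫) := by
  have h := norm_gradientStep_sub_sq_le hL hμ.le (by positivity : 0 ≤ τ * γ) hsmooth hsc z xstar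
  rw [bregman] at h
  linear_combination h
end

section
/- Suppose f : R^d → R is L-smooth, and a random update satisfies E[x⁺ | x] = x − γτ∇f(x) and E[‖x⁺ − x‖² | x] ≤ γ²τ²‖∇f(x)‖² + γ²(τ/n²)∑ᵢ((1−τ)‖∇fᵢ(x)‖² + σ²) with (1/n)∑ᵢ‖∇fᵢ(x) − ∇f(x)‖² ≤ ν². Then E f(x⁺) ≤ f(x) − γτ(1 − γτL/2 − γL(1−τ)/n)‖∇f(x)‖² + γ²Lτ((1−τ)ν² + σ²/2)/n. -/
/-!
Apply the smoothness upper bound at `x` pointwise and take expectations: the linear term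
becomes `⟪∇f(x), E x⁺ - x⟫ = -γτ‖∇f(x)‖²` and the quadratic term is controlled by the second
moment bound. The remaining `∑ᵢ‖∇fᵢ(x)‖²` is reduced to the gradient-dissimilarity bound `ν²`
via `‖a‖² ≤ 2‖a - b‖² + 2‖b‖²`.
-/

open MeasureTheory Finset
open scoped RealInnerProductSpace

theorem sum_norm_sq_le_two_mul_sum_norm_sub_sq_add {ι E : Type*} [SeminormedAddGroup E]
    (s : Finset ι) (v : ι → E) (w : E) :
    ∑ i ∈ s, ‖v i‖ ^ 2 ≤ 2 * ∑ i ∈ s, ‖v i - w‖ ^ 2 + 2 * #s * ‖w‖ ^ 2 := by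
  have hle (i : ι) : ‖v i‖ ^ 2 ≤ 2 * (‖v i - w‖ ^ 2 + ‖w‖ ^ 2) :=
    (pow_le_pow_left₀ (norm_nonneg _) (norm_le_norm_sub_add (v i) w) 2).trans add_sq_le
  calc ∑ i ∈ s, ‖v i‖ ^ 2 ≤ ∑ i ∈ s, 2 * (‖v i - w‖ ^ 2 + ‖w‖ ^ 2) := sum_le_sum fun i _ => hle i
    _ = 2 * ∑ i ∈ s, ‖v i - w‖ ^ 2 + 2 * #s * ‖w‖ ^ 2 := by
      rw [← mul_sum, sum_add_distrib, sum_const, nsmul_eq_mul]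
      ring

theorem integral_comp_le_of_le_quadratic {E Ω : Type*} [NormedAddCommGroup E]
    [InnerProductSpace ℝ E] [CompleteSpace E] [MeasurableSpace Ω] {μ : Measure Ω}
    [IsProbabilityMeasure μ] {f : E → ℝ} {g x : E} {L : ℝ}
    (hf : ∀ y, f y ≤ f x + ⟪g, y - x⟫ + L / 2 * ‖y - x‖ ^ 2) {X : Ω → E}
    (hX : Integrable X μ) (hfX : Integrable (fun ω => f (X ω)) μ)
    (hX2 : Integrable (fun ω => ‖X ω - x‖ ^ 2) μ) :
    ∫ ω, f (X ω) ∂μ ≤ f x + ⟪g, (∫ ω, X ω ∂μ) - x⟫ + L / 2 * ∫ ω, ‖X ω - x‖ ^ 2 ∂μ := by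
  have hXx : Integrable (fun ω => X ω - x) μ := hX.sub (integrable_const x)
  have hinner : Integrable (fun ω => ⟪g, X ω - x⟫) μ := hXx.const_inner g
  have haffine : Integrable (fun ω => f x + ⟪g, X ω - x⟫) μ := (integrable_const _).add hinner
  calc ∫ ω, f (X ω) ∂μ ≤ ∫ ω, (f x + ⟪g, X ω - x⟫ + L / 2 * ‖X ω - x‖ ^ 2) ∂μ :=
        integral_mono hfX (haffine.add (hX2.const_mul _)) fun ω => hf _
    _ = f x + ⟪g, (∫ ω, X ω ∂μ) - x⟫ + L / 2 * ∫ ω, ‖X ω - x‖ ^ 2 ∂μ := by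
      rw [integral_add haffine (hX2.const_mul _),
        integral_add (integrable_const _) hinner, integral_const_mul, integral_inner hXx,
        integral_sub hX (integrable_const x)]
      simp only [integral_const, probReal_univ, one_smul]

theorem stmt17_general {d n : ℕ} (hn : 0 < n) (L γ τ σ2 ν2 : ℝ)
    (hL : 0 < L) (hτ0 : 0 < τ) (hτ1 : τ ≤ 1)
    {Ω : Type*} [MeasurableSpace Ω] (μ : Measure Ω) [IsProbabilityMeasure μ]
    (f : EuclideanSpace ℝ (Fin d) → ℝ)
    (Gf : EuclideanSpace ℝ (Fin d) → EuclideanSpace ℝ (Fin d))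
    (G : Fin n → EuclideanSpace ℝ (Fin d) → EuclideanSpace ℝ (Fin d))
    (hsmooth : ∀ x y : EuclideanSpace ℝ (Fin d),
      f x ≤ f y + ⟪Gf y, x - y⟫ + L / 2 * ‖x - y‖ ^ 2)
    (x : EuclideanSpace ℝ (Fin d)) (xplus : Ω → EuclideanSpace ℝ (Fin d))
    (hint : Integrable xplus μ)
    (hintf : Integrable (fun ω => f (xplus ω)) μ)
    (hint2 : Integrable (fun ω => ‖xplus ω - x‖ ^ 2) μ)
    (hmean : ∫ ω, xplus ω ∂μ = x - (γ * τ) • Gf x)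
    (hsecond : ∫ ω, ‖xplus ω - x‖ ^ 2 ∂μ
      ≤ γ ^ 2 * τ ^ 2 * ‖Gf x‖ ^ 2
        + γ ^ 2 * (τ / (n : ℝ) ^ 2) * ∑ i, ((1 - τ) * ‖G i x‖ ^ 2 + σ2))
    (hdev : (n : ℝ)⁻¹ * ∑ i, ‖G i x - Gf x‖ ^ 2 ≤ ν2) :
    ∫ ω, f (xplus ω) ∂μ
      ≤ f x - γ * τ * (1 - γ * τ * L / 2 - γ * L * (1 - τ) / n) * ‖Gf x‖ ^ 2
        + γ ^ 2 * L * τ * ((1 - τ) * ν2 + σ2 / 2) / n := by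
  have hnpos : (0 : ℝ) < n := Nat.cast_pos.mpr hn
  have hdescent := integral_comp_le_of_le_quadratic (hsmooth · x) hint hintf hint2
  rw [hmean, sub_sub_cancel_left, inner_neg_right, real_inner_smul_right,
    real_inner_self_eq_norm_sq] at hdescent
  have hgrad : ∑ i, ‖G i x‖ ^ 2 ≤ n * (2 * ν2 + 2 * ‖Gf x‖ ^ 2) := by
    have := sum_norm_sq_le_two_mul_sum_norm_sub_sq_add univ (G · x) (Gf x)
    rw [card_univ, Fintype.card_fin] at this
    rw [inv_mul_le_iff₀ hnpos] at hdev
    linarith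
  have hsum : ∑ i, ((1 - τ) * ‖G i x‖ ^ 2 + σ2)
      ≤ n * ((1 - τ) * (2 * ν2 + 2 * ‖Gf x‖ ^ 2) + σ2) := by
    rw [sum_add_distrib, ← mul_sum, sum_const, card_univ, Fintype.card_fin, nsmul_eq_mul]
    nlinarith
  calc ∫ ω, f (xplus ω) ∂μ
      ≤ f x + -(γ * τ * ‖Gf x‖ ^ 2) + L / 2 * (γ ^ 2 * τ ^ 2 * ‖Gf x‖ ^ 2
        + γ ^ 2 * (τ / (n : ℝ) ^ 2) * (n * ((1 - τ) * (2 * ν2 + 2 * ‖Gf x‖ ^ 2) + σ2))) :=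
      hdescent.trans (by gcongr; exact hsecond.trans (by gcongr))
    _ = f x - γ * τ * (1 - γ * τ * L / 2 - γ * L * (1 - τ) / n) * ‖Gf x‖ ^ 2
        + γ ^ 2 * L * τ * ((1 - τ) * ν2 + σ2 / 2) / n := by
      field_simp
      ring

/-- Non-convex descent lemma: if `f` is `L`-smooth with gradient `Gf`, the random
update `x⁺` satisfies `E x⁺ = x − γτ∇f(x)` and
`E‖x⁺ − x‖² ≤ γ²τ²‖∇f(x)‖² + γ²(τ/n²)∑ᵢ((1 − τ)‖∇fᵢ(x)‖² + σ²)`, and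
`(1/n)∑ᵢ‖∇fᵢ(x) − ∇f(x)‖² ≤ ν²`, then
`E f(x⁺) ≤ f(x) − γτ(1 − γτL/2 − γL(1 − τ)/n)‖∇f(x)‖² + γ²Lτ((1 − τ)ν² + σ²/2)/n`. -/
theorem stmt17 {d n : ℕ} (hn : 0 < n) (L γ τ σ2 ν2 : ℝ)
    (hL : 0 < L) (hγ : 0 < γ) (hτ0 : 0 < τ) (hτ1 : τ ≤ 1) (hσ : 0 ≤ σ2) (hν : 0 ≤ ν2)
    {Ω : Type*} [MeasurableSpace Ω] (μ : Measure Ω) [IsProbabilityMeasure μ]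
    (f : EuclideanSpace ℝ (Fin d) → ℝ)
    (Gf : EuclideanSpace ℝ (Fin d) → EuclideanSpace ℝ (Fin d))
    (G : Fin n → EuclideanSpace ℝ (Fin d) → EuclideanSpace ℝ (Fin d))
    (hsmooth : ∀ x y : EuclideanSpace ℝ (Fin d),
      f x ≤ f y + ⟪Gf y, x - y⟫ + L / 2 * ‖x - y‖ ^ 2)
    (x : EuclideanSpace ℝ (Fin d)) (xplus : Ω → EuclideanSpace ℝ (Fin d))
    (hint : Integrable xplus μ)
    (hintf : Integrable (fun ω => f (xplus ω)) μ)
    (hint2 : Integrable (fun ω => ‖xplus ω - x‖ ^ 2) μ)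
    (hmean : ∫ ω, xplus ω ∂μ = x - (γ * τ) • Gf x)
    (hsecond : ∫ ω, ‖xplus ω - x‖ ^ 2 ∂μ
      ≤ γ ^ 2 * τ ^ 2 * ‖Gf x‖ ^ 2
        + γ ^ 2 * (τ / (n : ℝ) ^ 2) * ∑ i, ((1 - τ) * ‖G i x‖ ^ 2 + σ2))
    (hdev : (n : ℝ)⁻¹ * ∑ i, ‖G i x - Gf x‖ ^ 2 ≤ ν2) :
    ∫ ω, f (xplus ω) ∂μ
      ≤ f x - γ * τ * (1 - γ * τ * L / 2 - γ * L * (1 - τ) / n) * ‖Gf x‖ ^ 2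
        + γ ^ 2 * L * τ * ((1 - τ) * ν2 + σ2 / 2) / n :=
  stmt17_general hn L γ τ σ2 ν2 hL hτ0 hτ1 μ f Gf G hsmooth x xplus hint hintf hint2 hmean hsecond
    hdev
end

section
/- Suppose a nonnegative sequence satisfies ψᵗ ≤ (1 − ρ)·max_{i}ψ^{t − dᵢᵗ} + C for all t, where 0 ≤ ρ < 1, C ≥ 0, delays satisfy 0 ≤ dᵢᵗ ≤ M, and ψ⁰ is given. Then for t ∈ [Mk, M(k+1)), ψᵗ ≤ (1 − ρ)^k ψ⁰ + C/ρ (assuming ρ > 0). -/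
/-!
Put `Bₖ := (1 - ρ)^k ψ⁰ + C/ρ`. Since `C/ρ` is the fixed point of `x ↦ (1 - ρ) x + C`, one
contraction step maps `Bₖ` to `Bₖ₊₁`, and `Bₖ` decreases in `k`. A delay of at most `M` steps
moves back by at most one epoch of length `M`, so strong induction on `t` gives
`ψᵗ ≤ B_{⌊t/M⌋}`. A step without delay reads `ψᵗ ≤ (1 - ρ) ψᵗ + C`, i.e. `ψᵗ ≤ C/ρ`.
-/

noncomputable def epochBound (ρ C a : ℝ) (k : ℕ) : ℝ := (1 - ρ) ^ k * a + C / ρ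

section EpochBound

variable {ρ C a : ℝ}

theorem epochBound_succ (hρ : ρ ≠ 0) (k : ℕ) :
    (1 - ρ) * epochBound ρ C a k + C = epochBound ρ C a (k + 1) := by
  unfold epochBound
  field_simp
  ring

theorem epochBound_antitone (hρ0 : 0 ≤ ρ) (hρ1 : ρ ≤ 1) (ha : 0 ≤ a) :
    Antitone (epochBound ρ C a) := fun _ _ hkl =>
  add_le_add_left (mul_le_mul_of_nonneg_right
    (pow_le_pow_of_le_one (by linarith) (by linarith) hkl) ha) _

theorem div_le_epochBound (hρ1 : ρ ≤ 1) (ha : 0 ≤ a) (k : ℕ) :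
    C / ρ ≤ epochBound ρ C a k :=
  le_add_of_nonneg_left (mul_nonneg (pow_nonneg (by linarith) k) ha)

theorem le_epochBound_of_delayed_contraction {M : ℕ} (hM : 0 < M) (hρ0 : 0 < ρ) (hρ1 : ρ ≤ 1)
    (hC : 0 ≤ C) {ψ : ℕ → ℝ} (hψ0 : 0 ≤ ψ 0)
    (hstep : ∀ t, 1 ≤ t → ∃ s ≤ t, t ≤ s + M ∧ ψ t ≤ (1 - ρ) * ψ s + C) (t : ℕ) :
    ψ t ≤ epochBound ρ C (ψ 0) (t / M) := by
  induction t using Nat.strong_induction_on with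
  | _ t ih =>
    rcases Nat.eq_zero_or_pos t with rfl | ht
    · exact le_add_of_nonneg_right (div_nonneg hC hρ0.le) |>.trans_eq (by simp [epochBound])
    obtain ⟨s, hst, hts, hψt⟩ := hstep t ht
    rcases hst.lt_or_eq with hlt | rfl
    · have hepoch : t / M ≤ s / M + 1 := by
        simpa [Nat.add_div_right s hM] using Nat.div_le_div_right (c := M) hts
      calc ψ t ≤ (1 - ρ) * ψ s + C := hψt
        _ ≤ (1 - ρ) * epochBound ρ C (ψ 0) (s / M) + C := by
            gcongr
            exact ih s hlt
        _ = epochBound ρ C (ψ 0) (s / M + 1) := epochBound_succ hρ0.ne' _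
        _ ≤ epochBound ρ C (ψ 0) (t / M) := epochBound_antitone hρ0.le hρ1 hψ0 hepoch
    · have hfixed : ψ s ≤ C / ρ := by
        rw [le_div_iff₀ hρ0]
        linarith
      exact hfixed.trans (div_le_epochBound hρ1 hψ0 _)

end EpochBound

theorem stmt19_general {n : ℕ} (M : ℕ) (ρ C : ℝ) (hρ0 : 0 < ρ) (hρ1 : ρ < 1) (hC : 0 ≤ C)
    (ψ : ℕ → ℝ) (hψ : ∀ t, 0 ≤ ψ t)
    (dly : Fin (n + 1) → ℕ → ℕ)
    (hd : ∀ i t, dly i t ≤ M)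
    (hrec : ∀ t, 1 ≤ t →
      ψ t ≤ (1 - ρ) * (Finset.univ.sup' Finset.univ_nonempty
        (fun i : Fin (n + 1) => ψ (t - dly i t))) + C) :
    ∀ k t, M * k ≤ t → t < M * (k + 1) → ψ t ≤ (1 - ρ) ^ k * ψ 0 + C / ρ := by
  intro k t hlo hhi
  have hM : 0 < M := Nat.pos_of_ne_zero (by rintro rfl; simp at hhi)
  have hstep : ∀ t, 1 ≤ t → ∃ s ≤ t, t ≤ s + M ∧ ψ t ≤ (1 - ρ) * ψ s + C := by
    intro t ht
    obtain ⟨i, -, hi⟩ := Finset.exists_mem_eq_sup' Finset.univ_nonempty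
      (fun i : Fin (n + 1) => ψ (t - dly i t))
    exact ⟨t - dly i t, Nat.sub_le _ _, by have := hd i t; omega, hi ▸ hrec t ht⟩
  have hepoch : t / M = k := Nat.div_eq_of_lt_le (by linarith) (by linarith)
  simpa [hepoch, epochBound] using
    le_epochBound_of_delayed_contraction hM hρ0 hρ1.le hC (hψ 0) hstep t

/-- Abstract epoch contraction for asynchronous SGD: a nonnegative sequence with
`ψᵗ ≤ (1 − ρ)·maxᵢ ψ^{t − dᵢᵗ} + C` for all `t ≥ 1`, delays `0 ≤ dᵢᵗ ≤ M` with
`dᵢᵗ ≤ t`, and `0 < ρ < 1`, `C ≥ 0`, satisfies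
`ψᵗ ≤ (1 − ρ)^k ψ⁰ + C/ρ` for all `t ∈ [Mk, M(k+1))`. -/
theorem stmt19 {n : ℕ} (M : ℕ) (ρ C : ℝ) (hρ0 : 0 < ρ) (hρ1 : ρ < 1) (hC : 0 ≤ C)
    (ψ : ℕ → ℝ) (hψ : ∀ t, 0 ≤ ψ t)
    (dly : Fin (n + 1) → ℕ → ℕ)
    (hd : ∀ i t, dly i t ≤ M) (hdt : ∀ i t, dly i t ≤ t)
    (hrec : ∀ t, 1 ≤ t →
      ψ t ≤ (1 - ρ) * (Finset.univ.sup' Finset.univ_nonempty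
        (fun i : Fin (n + 1) => ψ (t - dly i t))) + C) :
    ∀ k t, M * k ≤ t → t < M * (k + 1) → ψ t ≤ (1 - ρ) ^ k * ψ 0 + C / ρ :=
  stmt19_general M ρ C hρ0 hρ1 hC ψ hψ dly hd hrec
end
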